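/- For a graph G on n ≥ 2 vertices, maxdc(G) = 2 if and only if G is the disjoint union of a complete graph on an even number of vertices and a (possibly empty) set of isolated vertices. -/

import Mathlib

variable {V : Type*}

/-- An orientation of a simple graph: a relation choosing a direction for each edge. -/
def IsOrientation (G : SimpleGraph V) (r : V → V → Prop) : Prop :=
  (∀ u v, G.Adj u v ↔ (r u v ∨ r v u)) ∧ ∀ u v, r u v → ¬ r v u

/-- A relation is acyclic if it has no directed cycle. -/
def AcyclicRel (r : V → V → Prop) : Prop := ∀ v, ¬ Relation.TransGen r v v

/-- Indegree of a vertex in an orientation. -/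
noncomputable def inDeg (r : V → V → Prop) (v : V) : ℕ := {u | r u v}.ncard

/-- Dual-critical: there is an acyclic orientation in which all vertices except one
have odd indegree. -/
def DualCritical (G : SimpleGraph V) : Prop :=
  ∃ r : V → V → Prop, IsOrientation G r ∧ AcyclicRel r ∧
    ∃ s : V, ∀ v : V, v ≠ s → Odd (inDeg r v)

/-- Dual-critical via a good ordering: an enumeration of all vertices such that every
vertex except the first has an odd number of neighbours among its predecessors. -/
def DualCriticalOrd (G : SimpleGraph V) : Prop :=
  ∃ (n : ℕ) (e : Fin n ≃ V), ∀ i : Fin n, 0 < i.val →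
    Odd ({j : Fin n | j < i ∧ G.Adj (e j) (e i)}.ncard)

/-- Number of edges between two (disjoint) vertex sets. -/
noncomputable def cut (G : SimpleGraph V) (A B : Set V) : ℕ :=
  {p : V × V | p.1 ∈ A ∧ p.2 ∈ B ∧ G.Adj p.1 p.2}.ncard

/-- A good `k`-partition: an ordered partition into nonempty classes such that each class
after the first is joined to the union of the previous ones by an odd number of edges. -/
def GoodPartition (G : SimpleGraph V) {k : ℕ} (P : Fin k → Set V) : Prop :=
  (∀ i, (P i).Nonempty) ∧ Pairwise (Function.onFun Disjoint P) ∧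
  (⋃ i, P i) = Set.univ ∧
  ∀ i : Fin k, 0 < i.val → Odd (cut G (⋃ j ∈ {j : Fin k | j < i}, P j) (P i))

def KDualCritical (G : SimpleGraph V) (k : ℕ) : Prop :=
  ∃ P : Fin k → Set V, GoodPartition G P

noncomputable def maxdc (G : SimpleGraph V) : ℕ := sSup {k | KDualCritical G k}

/-- A `T`-odd orientation: vertices in `T` have odd indegree, others even. -/
def TOdd (r : V → V → Prop) (T : Set V) : Prop :=
  ∀ v, (v ∈ T → Odd (inDeg r v)) ∧ (v ∉ T → Even (inDeg r v))

/-- Super-dual-critical: deleting any vertex leaves a dual-critical graph. -/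
def SuperDualCritical (G : SimpleGraph V) : Prop :=
  ∀ v : V, DualCriticalOrd (G.induce ({v}ᶜ : Set V))

/-!
If every edge lies in a clique `K`, the number of edges between disjoint sets `A` and `B` is
`|K ∩ A| · |K ∩ B|`. In a good partition `|K ∩ P₀|` and `|K ∩ P₁|` are then odd, so
`|K ∩ (P₀ ∪ P₁)|` is even and no class `P₂` can follow; and if `|K|` is even, splitting off one
vertex of `K` gives a good 2-partition.

Conversely, the cut between `S` and its complement has the parity of the degree sum over `S`. A
good 2-partition therefore forces a vertex `w` of odd degree, and whenever `S` has odd degree sum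
and `y ∉ S` has an odd number of neighbours outside `S`, `(V ∖ (S ∪ {y}), {y}, S)` is a good
3-partition. If there is none, `S = {w}` shows that the odd-degree vertices other than `w` are
exactly the neighbours of `w`, hence form a clique, and `S = {w, x}` shows that no edge joins two
vertices of even degree. By the handshake lemma there is an even number of odd-degree vertices.
-/

lemma SimpleGraph.ncard_neighborSet (G : SimpleGraph V) [Fintype V] [DecidableRel G.Adj] (v : V) :
    (G.neighborSet v).ncard = G.degree v := by
  rw [← Nat.card_coe_set_eq, Nat.card_eq_fintype_card, G.card_neighborSet_eq_degree]

lemma SimpleGraph.ncard_neighborSet_inter_singleton (G : SimpleGraph V) [DecidableRel G.Adj]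
    (u w : V) :
    (G.neighborSet u ∩ {w}).ncard = if G.Adj u w then 1 else 0 := by
  split_ifs with h
  · rw [Set.inter_singleton_of_mem (s := G.neighborSet u) h, Set.ncard_singleton]
  · rw [(Set.inter_singleton_eq_empty (s := G.neighborSet u)).mpr h, Set.ncard_empty]

section Cut

variable (G : SimpleGraph V)

lemma cut_comm (A B : Set V) : cut G A B = cut G B A := by
  have : {p : V × V | p.1 ∈ A ∧ p.2 ∈ B ∧ G.Adj p.1 p.2} =
      Prod.swap '' {p : V × V | p.1 ∈ B ∧ p.2 ∈ A ∧ G.Adj p.1 p.2} := by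
    ext ⟨u, v⟩
    simp [G.adj_comm, and_comm, and_left_comm]
  rw [cut, cut, this, Set.ncard_image_of_injective _ Prod.swap_injective]

lemma cut_singleton_right (A : Set V) (y : V) : cut G A {y} = (G.neighborSet y ∩ A).ncard := by
  have : {p : V × V | p.1 ∈ A ∧ p.2 ∈ ({y} : Set V) ∧ G.Adj p.1 p.2} =
      (fun u ↦ (u, y)) '' (G.neighborSet y ∩ A) := by
    ext ⟨u, v⟩
    simp only [Set.mem_ofPred_eq, Set.mem_singleton_iff, Set.mem_image, Set.mem_inter_iff,
      SimpleGraph.mem_neighborSet, Prod.mk.injEq]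
    constructor
    · rintro ⟨hu, rfl, huv⟩
      exact ⟨u, ⟨huv.symm, hu⟩, rfl, rfl⟩
    · rintro ⟨u, ⟨hyu, hu⟩, rfl, rfl⟩
      exact ⟨hu, rfl, hyu.symm⟩
  rw [cut, this, Set.ncard_image_of_injective _ fun _ _ h ↦ (Prod.ext_iff.mp h).1]

lemma cut_eq_ncard_mul {K : Set V} (hK : G.IsClique K) (hE : ∀ u v, G.Adj u v → u ∈ K ∧ v ∈ K)
    {A B : Set V} (h : Disjoint A B) : cut G A B = (K ∩ A).ncard * (K ∩ B).ncard := by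
  rw [cut, ← Set.ncard_prod]
  congr 1
  ext ⟨u, v⟩
  simp only [Set.mem_ofPred_eq, Set.mem_prod, Set.mem_inter_iff]
  refine ⟨fun ⟨hu, hv, huv⟩ ↦ ⟨⟨(hE u v huv).1, hu⟩, (hE u v huv).2, hv⟩,
    fun ⟨⟨huK, hu⟩, hvK, hv⟩ ↦ ⟨hu, hv, hK huK hvK ?_⟩⟩
  rintro rfl
  exact Set.disjoint_left.mp h hu hv

variable [Finite V]

lemma cut_union_left {A A' : Set V} (h : Disjoint A A') (B : Set V) :
    cut G (A ∪ A') B = cut G A B + cut G A' B := by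
  rw [cut, cut, cut, ← Set.ncard_union_eq]
  · congr 1
    ext p
    simp [or_and_right]
  · exact Set.disjoint_left.mpr fun p hp hp' ↦ Set.disjoint_left.mp h hp.1 hp'.1

lemma cut_union_right (A : Set V) {B B' : Set V} (h : Disjoint B B') :
    cut G A (B ∪ B') = cut G A B + cut G A B' := by
  rw [cut_comm, cut_union_left G h, cut_comm, cut_comm G B']

lemma even_cut_self (B : Set V) : Even (cut G B B) := by
  induction B, B.toFinite using Set.Finite.induction_on with
  | empty => simp [cut]
  | @insert a s ha _ ih =>
    have hd : Disjoint {a} s := Set.disjoint_singleton_left.mpr ha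
    rw [Set.insert_eq, cut_union_left G hd, cut_union_right G _ hd, cut_union_right G _ hd,
      cut_comm G s {a}, cut_singleton_right]
    simpa [← add_assoc, ← two_mul] using (even_two_mul _).add ih

end Cut

section Degree

variable (G : SimpleGraph V) [Fintype V] [DecidableRel G.Adj]

lemma cut_univ_left (s : Finset V) : cut G Set.univ s = ∑ v ∈ s, G.degree v := by
  classical
  induction s using Finset.induction_on with
  | empty => simp [cut]
  | insert a s ha ih =>
    rw [Finset.coe_insert, Set.insert_eq,
      cut_union_right G _ (Set.disjoint_singleton_left.mpr ha), cut_singleton_right,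
      Set.inter_univ, G.ncard_neighborSet, ih, Finset.sum_insert ha]

lemma odd_cut_compl_iff (s : Finset V) :
    Odd (cut G (↑s)ᶜ ↑s) ↔ Odd (∑ v ∈ s, G.degree v) := by
  rw [← cut_univ_left, ← Set.compl_union_self (s : Set V),
    cut_union_left G disjoint_compl_left, Nat.odd_add]
  simp [even_cut_self]

lemma exists_odd_degree_of_odd_cut {B : Set V} (h : Odd (cut G Bᶜ B)) :
    ∃ v ∈ B, Odd (G.degree v) := by
  lift B to Finset V using B.toFinite
  rw [odd_cut_compl_iff, Finset.odd_sum_iff_odd_card_odd] at h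
  obtain ⟨v, hv⟩ := Finset.card_pos.mp h.pos
  exact ⟨v, (Finset.mem_filter.mp hv).1, (Finset.mem_filter.mp hv).2⟩

end Degree

section Partition

variable {G : SimpleGraph V}

lemma KDualCritical.le_card [Fintype V] {k : ℕ} (h : KDualCritical G k) : k ≤ Fintype.card V := by
  obtain ⟨P, hne, hdisj, -, -⟩ := h
  choose f hf using hne
  have hf_inj : Function.Injective f := fun i j hij ↦ by
    by_contra hne
    exact Set.disjoint_left.mp (hdisj hne) (hf i) (hij ▸ hf j)
  simpa using Fintype.card_le_of_injective f hf_inj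

lemma biUnion_fin_lt_one {m : ℕ} (P : Fin (m + 2) → Set V) :
    (⋃ j ∈ {j | j < (1 : Fin (m + 2))}, P j) = P 0 := by
  simp [Fin.lt_one_iff]

lemma biUnion_fin_lt_two {m : ℕ} (P : Fin (m + 3) → Set V) :
    (⋃ j ∈ {j | j < (2 : Fin (m + 3))}, P j) = P 0 ∪ P 1 := by
  have : {j | j < (2 : Fin (m + 3))} = {0, 1} := by
    ext j
    simp only [Set.mem_ofPred_eq, Set.mem_insert_iff, Set.mem_singleton_iff, Fin.ext_iff,
      Fin.lt_def, Fin.val_zero, Fin.val_one, Fin.val_two]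
    omega
  rw [this, Set.biUnion_pair]

lemma kDualCritical_two {B : Set V} (hB : B.Nonempty) (hBc : Bᶜ.Nonempty)
    (h : Odd (cut G Bᶜ B)) : KDualCritical G 2 := by
  refine ⟨![Bᶜ, B], ?_, ?_, ?_, ?_⟩
  · intro i; fin_cases i <;> assumption
  · intro i j hij
    fin_cases i <;> fin_cases j <;>
      simp_all [Function.onFun, disjoint_compl_left, disjoint_compl_right]
  · ext x; simp [Fin.exists_fin_two, em']
  · intro i hi
    fin_cases i
    · simp at hi
    · simpa [biUnion_fin_lt_one (m := 0)] using h

lemma KDualCritical.exists_odd_degree [Fintype V] [DecidableRel G.Adj] (h : KDualCritical G 2) :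
    ∃ v, Odd (G.degree v) := by
  obtain ⟨P, -, hdisj, hcover, hodd⟩ := h
  have hP0 : P 0 = (P 1)ᶜ := by
    refine (Set.subset_compl_iff_disjoint_right.mpr (hdisj (by decide))).antisymm fun x hx ↦ ?_
    obtain ⟨i, hi⟩ := Set.mem_iUnion.mp (hcover ▸ Set.mem_univ x)
    fin_cases i
    exacts [hi, absurd hi hx]
  have hcut := hodd 1 one_pos
  rw [biUnion_fin_lt_one (m := 0), hP0] at hcut
  obtain ⟨v, -, hv⟩ := exists_odd_degree_of_odd_cut G hcut
  exact ⟨v, hv⟩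

lemma kDualCritical_three {C : Set V} {y : V} (hy : y ∉ C) (hC : C.Nonempty)
    (hyC : Odd (G.neighborSet y \ C).ncard) (hCc : Odd (cut G Cᶜ C)) : KDualCritical G 3 := by
  have hA : G.neighborSet y ∩ (insert y C)ᶜ = G.neighborSet y \ C := by
    ext u
    simp only [Set.mem_inter_iff, Set.mem_compl_iff, Set.mem_insert_iff, not_or,
      Set.mem_sdiff, SimpleGraph.mem_neighborSet]
    exact ⟨fun h ↦ ⟨h.1, h.2.2⟩, fun h ↦ ⟨h.1, h.1.ne', h.2⟩⟩
  have hAy : (insert y C)ᶜ ∪ {y} = Cᶜ := by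
    ext u
    by_cases hu : u = y <;> simp [hu, hy]
  refine ⟨![(insert y C)ᶜ, {y}, C], ?_, ?_, ?_, ?_⟩
  · intro i
    fin_cases i
    · exact (Set.nonempty_of_ncard_ne_zero hyC.pos.ne').mono (hA ▸ Set.inter_subset_right)
    · exact Set.singleton_nonempty y
    · exact hC
  · intro i j hij
    fin_cases i <;> fin_cases j <;> simp_all [Function.onFun, Set.disjoint_singleton_left,
      Set.disjoint_singleton_right, Set.disjoint_compl_left_iff_subset,
      Set.disjoint_compl_right_iff_subset]
  · ext x
    by_cases hx : x = y <;> simp [Fin.exists_fin_succ, hx, em']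
  · intro i hi
    fin_cases i
    · simp at hi
    · simpa [biUnion_fin_lt_one (m := 1), cut_singleton_right, hA] using hyC
    · show Odd (cut G (⋃ j ∈ {j | j < (2 : Fin 3)}, ![(insert y C)ᶜ, {y}, C] j) C)
      rw [biUnion_fin_lt_two (m := 0)]
      simpa [hAy] using hCc

lemma not_kDualCritical_of_isClique {K : Set V} (hK : G.IsClique K)
    (hE : ∀ u v, G.Adj u v → u ∈ K ∧ v ∈ K) {k : ℕ} (hk : 3 ≤ k) : ¬ KDualCritical G k := by
  obtain ⟨m, rfl⟩ := Nat.exists_eq_add_of_le' hk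
  rintro ⟨P, -, hdisj, -, hodd⟩
  have h01 : Disjoint (P 0) (P 1) := hdisj (by simp)
  have h012 : Disjoint (P 0 ∪ P 1) (P 2) := Disjoint.union_left
    (hdisj (by simp only [ne_eq, Fin.ext_iff, Fin.val_zero, Fin.val_two]; omega))
    (hdisj (by simp only [ne_eq, Fin.ext_iff, Fin.val_one, Fin.val_two]; omega))
  have hodd1 := hodd 1 (by simp)
  have hodd2 := hodd 2 (by rw [Fin.val_two]; omega)
  rw [biUnion_fin_lt_one, cut_eq_ncard_mul G hK hE h01, Nat.odd_mul] at hodd1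
  rw [biUnion_fin_lt_two, cut_eq_ncard_mul G hK hE h012, Nat.odd_mul,
    Set.inter_union_distrib_left,
    Set.ncard_union_eq (h01.mono Set.inter_subset_right Set.inter_subset_right)
      (Set.finite_of_ncard_pos hodd1.1.pos) (Set.finite_of_ncard_pos hodd1.2.pos),
    Nat.odd_add'] at hodd2
  exact (Nat.not_even_iff_odd.mpr hodd1.1) (hodd2.1.mp hodd1.2)

lemma kDualCritical_two_of_isClique [Finite V] {K : Set V} (hK : G.IsClique K)
    (hE : ∀ u v, G.Adj u v → u ∈ K ∧ v ∈ K) (hKe : Even K.ncard) {v : V} (hv : v ∈ K) :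
    KDualCritical G 2 := by
  have hKpos : 0 < K.ncard := (Set.ncard_pos (Set.toFinite K)).mpr ⟨v, hv⟩
  have hK_one_lt : 1 < K.ncard := by
    obtain ⟨r, hr⟩ := hKe
    omega
  obtain ⟨u, -, huv⟩ := Set.exists_ne_of_one_lt_ncard hK_one_lt v
  refine kDualCritical_two (Set.singleton_nonempty v) ⟨u, huv⟩ ?_
  rw [cut_eq_ncard_mul G hK hE disjoint_compl_left, Set.inter_singleton_of_mem hv,
    Set.ncard_singleton, mul_one, ← Set.sdiff_eq, Set.ncard_sdiff_singleton_of_mem hv]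
  exact Nat.Even.sub_odd hKpos hKe odd_one

end Partition

section NoGoodThreePartition

variable {G : SimpleGraph V} [Fintype V] [DecidableRel G.Adj] (h3 : ¬ KDualCritical G 3)
include h3

lemma even_ncard_neighborSet_sdiff {s : Finset V}
    (hs : Odd (∑ v ∈ s, G.degree v)) {y : V} (hy : y ∉ s) :
    Even (G.neighborSet y \ ↑s).ncard := by
  by_contra hodd
  have hs_ne : (s : Set V).Nonempty := Finset.coe_nonempty.mpr
    (Finset.nonempty_of_sum_ne_zero hs.pos.ne')
  exact h3 (kDualCritical_three (by simpa using hy) hs_ne (Nat.not_even_iff_odd.mp hodd)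
    ((odd_cut_compl_iff G s).mpr hs))

lemma odd_degree_iff_adj {w u : V} (hw : Odd (G.degree w)) (hu : u ≠ w) :
    Odd (G.degree u) ↔ G.Adj w u := by
  classical
  have heven := even_ncard_neighborSet_sdiff h3 (s := {w}) (by simpa using hw) (by simpa using hu)
  have hsplit := Set.ncard_inter_add_ncard_sdiff_eq_ncard (G.neighborSet u) {w}
  rw [G.ncard_neighborSet_inter_singleton, G.ncard_neighborSet] at hsplit
  rw [Finset.coe_singleton] at heven
  rw [← hsplit, G.adj_comm w u]
  by_cases hadj : G.Adj u w
  · simpa [hadj, add_comm] using heven.add_one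
  · simpa [hadj] using heven

lemma odd_degree_of_adj {w x y : V} (hw : Odd (G.degree w)) (hxy : G.Adj x y) :
    Odd (G.degree x) ∧ Odd (G.degree y) := by
  classical
  have odd_of_adj : ∀ {a b}, G.Adj a b → Odd (G.degree a) → Odd (G.degree b) :=
    fun hab ha ↦ (odd_degree_iff_adj h3 ha hab.ne').mpr hab
  suffices Odd (G.degree x) ∨ Odd (G.degree y) by
    rcases this with hx | hy
    exacts [⟨hx, odd_of_adj hxy hx⟩, ⟨odd_of_adj hxy.symm hy, hy⟩]
  by_contra! hxy_even
  obtain ⟨hx, hy⟩ : Even (G.degree x) ∧ Even (G.degree y) :=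
    ⟨Nat.not_odd_iff_even.mp hxy_even.1, Nat.not_odd_iff_even.mp hxy_even.2⟩
  have hwx : w ≠ x := by rintro rfl; exact Nat.not_even_iff_odd.mpr hw hx
  have hwy : w ≠ y := by rintro rfl; exact Nat.not_even_iff_odd.mpr hw hy
  have hnwy : ¬ G.Adj w y := fun h ↦ hxy_even.2 ((odd_degree_iff_adj h3 hw hwy.symm).mpr h)
  have heven := even_ncard_neighborSet_sdiff h3 (s := {w, x}) (y := y)
    (by rw [Finset.sum_pair hwx]; exact hw.add_even hx)
    (by simp [hwy.symm, hxy.ne.symm])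
  have hsplit := Set.ncard_inter_add_ncard_sdiff_eq_ncard (G.neighborSet y) {w, x}
  have hNy : G.neighborSet y ∩ {w, x} = {x} := by
    ext u
    simp only [Set.mem_inter_iff, SimpleGraph.mem_neighborSet, Set.mem_insert_iff,
      Set.mem_singleton_iff]
    constructor
    · rintro ⟨hyu, rfl | rfl⟩
      exacts [absurd hyu.symm hnwy, rfl]
    · rintro rfl
      exact ⟨hxy.symm, Or.inr rfl⟩
  rw [hNy, Set.ncard_singleton, G.ncard_neighborSet] at hsplit
  rw [Finset.coe_pair] at heven
  rw [← hsplit] at hy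
  exact Nat.not_even_iff_odd.mpr (by simpa [add_comm] using heven.add_one) hy

end NoGoodThreePartition

theorem stmt18_general [Fintype V] (G : SimpleGraph V) :
    maxdc G = 2 ↔
      ∃ K : Set V, K.Nonempty ∧ Even K.ncard ∧ G.IsClique K ∧
        ∀ u v : V, G.Adj u v → u ∈ K ∧ v ∈ K := by
  classical
  constructor
  · intro hmax
    have hbdd : BddAbove {k | KDualCritical G k} := ⟨Fintype.card V, fun _ hk ↦ hk.le_card⟩
    have hne : {k | KDualCritical G k}.Nonempty :=
      Set.nonempty_iff_ne_empty.mpr fun he ↦ by simp [maxdc, he] at hmax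
    have h2 : KDualCritical G 2 := hmax ▸ Nat.sSup_mem hne hbdd
    have h3 : ¬ KDualCritical G 3 := fun hk3 ↦ by
      have := le_csSup hbdd hk3
      rw [← maxdc, hmax] at this
      omega
    obtain ⟨w, hw⟩ := h2.exists_odd_degree
    refine ⟨{v | Odd (G.degree v)}, ⟨w, hw⟩, ?_, ?_, fun x y hxy ↦ odd_degree_of_adj h3 hw hxy⟩
    · simpa [Set.ncard_eq_toFinset_card'] using G.even_card_odd_degree_vertices
    · exact fun a ha b hb hab ↦ (odd_degree_iff_adj h3 ha hab.symm).mp hb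
  · rintro ⟨K, ⟨v, hv⟩, hKe, hK, hE⟩
    exact IsGreatest.csSup_eq ⟨kDualCritical_two_of_isClique hK hE hKe hv,
      fun k hk ↦ not_lt.mp fun hk3 ↦ not_kDualCritical_of_isClique hK hE hk3 hk⟩

theorem stmt18 [Fintype V] (G : SimpleGraph V) (h : 2 ≤ Fintype.card V) :
    maxdc G = 2 ↔
      ∃ K : Set V, K.Nonempty ∧ Even K.ncard ∧ G.IsClique K ∧
        ∀ u v : V, G.Adj u v → u ∈ K ∧ v ∈ K :=
  stmt18_general G
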